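/- arXiv:1410.0419 — 3 statements merged into one kernel-verified Lean document; each statement's English description precedes it below -/
import Mathlib

section
/- If R₁, R₂ : ℝ → ℂ solve the radial Chandrasekhar system and both |R₁|² and |R₂|² are integrable on ℝ, then |R₁(r)| = |R₂(r)| for all r. -/
/-! The system has the form `R₁' = iθ R₁ + c̄ R₂`, `R₂' = -iθ R₂ + c R₁` with `θ` real and
`c = (imr + λ)/√(r² + a²)`: the diagonal part is skew and the coupling is adjoint, so
`(|R₁|² - |R₂|²)' = 2 Re(R̄₁ R₁') - 2 Re(R̄₂ R₂') = 0`. Hence `|R₁|² - |R₂|²` is a constant which,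
being integrable over `ℝ`, must vanish. -/

open MeasureTheory Complex ComplexConjugate

theorem Complex.inner_I_mul_add_conj_mul_eq (z₁ z₂ c : ℂ) (θ₁ θ₂ : ℝ) :
    inner ℝ z₁ (I * θ₁ * z₁ + conj c * z₂) = inner ℝ z₂ (I * θ₂ * z₂ + c * z₁) := by
  simp only [Complex.inner, mul_re, add_re, mul_im, add_im, conj_re, conj_im, I_re, I_im,
    ofReal_re, ofReal_im]
  ring

theorem hasDerivAt_norm_sq_sub_norm_sq_eq_zero {R₁ R₂ : ℝ → ℂ} {θ₁ θ₂ : ℝ} {c : ℂ} {r : ℝ}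
    (h₁ : HasDerivAt R₁ (I * θ₁ * R₁ r + conj c * R₂ r) r)
    (h₂ : HasDerivAt R₂ (I * θ₂ * R₂ r + c * R₁ r) r) :
    HasDerivAt (fun t => ‖R₁ t‖ ^ 2 - ‖R₂ t‖ ^ 2) 0 r := by
  have h := h₁.norm_sq.sub h₂.norm_sq
  rwa [Complex.inner_I_mul_add_conj_mul_eq, sub_self] at h

theorem eq_zero_of_integrable_of_hasDerivAt_zero {E : Type*} [NormedAddCommGroup E]
    [NormedSpace ℝ E] {f : ℝ → E} (hf : ∀ x, HasDerivAt f 0 x) (hint : Integrable f) (x : ℝ) :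
    f x = 0 := by
  have hconst : f = fun _ => f 0 := funext fun y =>
    is_const_of_deriv_eq_zero (fun z => (hf z).differentiableAt) (fun z => (hf z).deriv) y 0
  rw [hconst] at hint ⊢
  exact (integrable_const_iff.1 hint).resolve_right (not_isFiniteMeasure_iff.2 Real.volume_univ)

theorem radial_moduli_equal_of_L2_general
    (E lam a kappa gamma m : ℝ) (R₁ R₂ : ℝ → ℂ)
    (h₁ : ∀ r : ℝ, HasDerivAt R₁
      (Complex.I * ((E : ℂ) - (((a * kappa - gamma * r) / (r ^ 2 + a ^ 2) : ℝ) : ℂ)) * R₁ r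
        - (Complex.I * (m : ℂ) * (r : ℂ) - (lam : ℂ)) * R₂ r
          / ((Real.sqrt (r ^ 2 + a ^ 2) : ℝ) : ℂ)) r)
    (h₂ : ∀ r : ℝ, HasDerivAt R₂
      (-(Complex.I * ((E : ℂ) - (((a * kappa - gamma * r) / (r ^ 2 + a ^ 2) : ℝ) : ℂ))) * R₂ r
        + (Complex.I * (m : ℂ) * (r : ℂ) + (lam : ℂ)) * R₁ r
          / ((Real.sqrt (r ^ 2 + a ^ 2) : ℝ) : ℂ)) r)
    (hL₁ : Integrable (fun r : ℝ => ‖R₁ r‖ ^ 2))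
    (hL₂ : Integrable (fun r : ℝ => ‖R₂ r‖ ^ 2)) :
    ∀ r : ℝ, ‖R₁ r‖ = ‖R₂ r‖ := by
  have hconserved (r : ℝ) : HasDerivAt (fun t => ‖R₁ t‖ ^ 2 - ‖R₂ t‖ ^ 2) 0 r := by
    set θ : ℝ := E - (a * kappa - gamma * r) / (r ^ 2 + a ^ 2)
    set s : ℝ := Real.sqrt (r ^ 2 + a ^ 2)
    refine hasDerivAt_norm_sq_sub_norm_sq_eq_zero (θ₁ := θ) (θ₂ := -θ)
      (c := (I * m * r + lam) / s) ((h₁ r).congr_deriv ?_) ((h₂ r).congr_deriv ?_)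
    · simp only [θ, ofReal_div, ofReal_sub, ofReal_mul, ofReal_add, ofReal_pow, map_div₀,
        map_add, map_mul, conj_I, conj_ofReal, neg_mul]
      ring
    · simp only [θ, ofReal_div, ofReal_sub, ofReal_mul, ofReal_add, ofReal_pow, neg_mul,
        neg_sub]
      ring
  intro r
  have hr := eq_zero_of_integrable_of_hasDerivAt_zero hconserved (hL₁.sub hL₂) r
  exact (sq_eq_sq₀ (norm_nonneg _) (norm_nonneg _)).1 (sub_eq_zero.1 hr)

/-- If `R₁, R₂` solve the radial Chandrasekhar system and `|R₁|², |R₂|²` are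
integrable on `ℝ`, then `|R₁(r)| = |R₂(r)|` for all `r`. -/
theorem radial_moduli_equal_of_L2
    (E lam a kappa gamma m : ℝ) (ha : 0 < a) (R₁ R₂ : ℝ → ℂ)
    (h₁ : ∀ r : ℝ, HasDerivAt R₁
      (Complex.I * ((E : ℂ) - (((a * kappa - gamma * r) / (r ^ 2 + a ^ 2) : ℝ) : ℂ)) * R₁ r
        - (Complex.I * (m : ℂ) * (r : ℂ) - (lam : ℂ)) * R₂ r
          / ((Real.sqrt (r ^ 2 + a ^ 2) : ℝ) : ℂ)) r)
    (h₂ : ∀ r : ℝ, HasDerivAt R₂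
      (-(Complex.I * ((E : ℂ) - (((a * kappa - gamma * r) / (r ^ 2 + a ^ 2) : ℝ) : ℂ))) * R₂ r
        + (Complex.I * (m : ℂ) * (r : ℂ) + (lam : ℂ)) * R₁ r
          / ((Real.sqrt (r ^ 2 + a ^ 2) : ℝ) : ℂ)) r)
    (hL₁ : Integrable (fun r : ℝ => ‖R₁ r‖ ^ 2))
    (hL₂ : Integrable (fun r : ℝ => ‖R₂ r‖ ^ 2)) :
    ∀ r : ℝ, ‖R₁ r‖ = ‖R₂ r‖ :=
  radial_moduli_equal_of_L2_general E lam a kappa gamma m R₁ R₂ h₁ h₂ hL₁ hL₂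
end

section
/- Uniqueness of the angular connector eigenvalue: Fix a ∈ (0,1/2), E ∈ [0,1], κ = 1/2. Suppose Θ, Θ' : (0,π) → (-π, 0) are C¹ solutions of dΘ/dθ = -2a cosθ cosΘ + 2(aE sinθ - (1/2)cscθ) sinΘ + 2λ and the same equation with λ' in place of λ respectively, both with boundary behavior Θ(0⁺) = 0, Θ(π⁻) = -π and one-sided derivatives (λ - a)/(κ + 1/2) at both endpoints (resp. with λ'). If λ' > λ then Θ'(θ) > Θ(θ) for θ near 0 and Θ'(θ) < Θ(θ) for θ near π, yet at any first crossing point θ* with Θ'(θ*) = Θ(θ*) one has (Θ' - Θ)'(θ*) = 2(λ' - λ) > 0, a contradiction; hence λ' = λ. -/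
/-!
If `λ < λ'`, the difference `D = Θ' - Θ` of the two angle functions has endpoint slopes
`λ' - λ > 0`, so it is positive near `0` and negative near `π`. But `λ` enters the equation
affinely, so at any zero of `D` the two right-hand sides differ by exactly `2(λ' - λ) > 0`:
`D` can only cross zero upwards, and a function that starts positive and only crosses zero
upwards stays nonnegative (continuous induction). Hence `λ' ≤ λ`, and symmetrically.
-/

open Real Filter Set Topology

lemma HasDerivWithinAt.eventually_pos_of_eq_zero {f : ℝ → ℝ} {f' x : ℝ}
    (hf : HasDerivWithinAt f f' (Ioi x) x) (hf' : 0 < f') (hx : f x = 0) :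
    ∀ᶠ y in 𝓝[>] x, 0 < f y := by
  rw [hasDerivWithinAt_iff_tendsto_slope' (s := Ioi x) (lt_irrefl x)] at hf
  filter_upwards [hf.eventually_const_lt hf', self_mem_nhdsWithin] with y hslope hy
  exact pos_of_slope_pos hy hslope hx

lemma nonneg_of_hasDerivWithinAt_pos_of_eq_zero {f : ℝ → ℝ} {c d : ℝ}
    (hf : ContinuousOn f (Icc c d)) (hc : 0 ≤ f c)
    (hzero : ∀ x ∈ Ico c d, f x = 0 → ∃ f' > 0, HasDerivWithinAt f f' (Ioi x) x) :
    ∀ x ∈ Icc c d, 0 ≤ f x := by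
  have hclosed : IsClosed ({x | 0 ≤ f x} ∩ Icc c d) := by
    rw [inter_comm]
    exact hf.preimage_isClosed_of_isClosed isClosed_Icc isClosed_Ici
  refine hclosed.Icc_subset_of_forall_mem_nhdsWithin hc fun x ⟨hfx, hx⟩ => ?_
  rcases (show 0 ≤ f x from hfx).eq_or_lt with hfx | hfx
  · obtain ⟨f', hf', hderiv⟩ := hzero x hx hfx.symm
    exact (hderiv.eventually_pos_of_eq_zero hf' hfx.symm).mono fun _ => le_of_lt
  · have hpos : ∀ᶠ y in 𝓝[Icc c d] x, 0 < f y :=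
      (hf x (Ico_subset_Icc_self hx)).eventually_const_lt hfx
    exact (hpos.filter_mono (nhdsWithin_le_of_mem (Icc_mem_nhdsGT_of_mem hx))).mono
      fun _ => le_of_lt

lemma false_of_comparison_of_slopes_lt (F : ℝ → ℝ → ℝ) {f g : ℝ → ℝ} {μ μ' s s' : ℝ}
    (hμ : μ < μ') (hs : s < s')
    (hf : ∀ θ ∈ Ioo 0 π, HasDerivAt f (F θ (f θ) + μ) θ)
    (hg : ∀ θ ∈ Ioo 0 π, HasDerivAt g (F θ (g θ) + μ') θ)
    (hf₀ : Tendsto (fun θ => f θ / θ) (𝓝[>] 0) (𝓝 s))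
    (hg₀ : Tendsto (fun θ => g θ / θ) (𝓝[>] 0) (𝓝 s'))
    (hfπ : Tendsto (fun θ => (f θ + π) / (θ - π)) (𝓝[<] π) (𝓝 s))
    (hgπ : Tendsto (fun θ => (g θ + π) / (θ - π)) (𝓝[<] π) (𝓝 s')) : False := by
  set D : ℝ → ℝ := fun θ => g θ - f θ
  have hD₀ : ∀ᶠ θ in 𝓝[>] 0, 0 < D θ := by
    filter_upwards [(hg₀.sub hf₀).eventually_const_lt (sub_pos.2 hs), self_mem_nhdsWithin]
      with θ hθ hθ₀
    rwa [← sub_div, div_pos_iff_of_pos_right hθ₀] at hθ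
  have hDπ : ∀ᶠ θ in 𝓝[<] π, D θ < 0 := by
    filter_upwards [(hgπ.sub hfπ).eventually_const_lt (sub_pos.2 hs), self_mem_nhdsWithin]
      with θ hθ hθπ
    rw [← sub_div, add_sub_add_right_eq_sub] at hθ
    exact ((div_pos_iff.1 hθ).resolve_left fun h => (sub_neg.2 hθπ).not_gt h.2).1
  have hDderiv : ∀ θ ∈ Ioo 0 π, HasDerivAt D (F θ (g θ) - F θ (f θ) + (μ' - μ)) θ :=
    fun θ hθ => ((hg θ hθ).sub (hf θ hθ)).congr_deriv (by ring)
  obtain ⟨c, hDc, hcπ, hc₀⟩ :=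
    (hD₀.and ((eventually_lt_nhds pi_pos).filter_mono nhdsWithin_le_nhds |>.and
      self_mem_nhdsWithin)).exists
  obtain ⟨d, hDd, hcd, hdπ⟩ :=
    (hDπ.and ((eventually_gt_nhds hcπ).filter_mono nhdsWithin_le_nhds |>.and
      self_mem_nhdsWithin)).exists
  have hsub : Icc c d ⊆ Ioo 0 π := Icc_subset_Ioo hc₀ hdπ
  have hnonneg := nonneg_of_hasDerivWithinAt_pos_of_eq_zero (f := D)
    (fun x hx => (hDderiv x (hsub hx)).continuousAt.continuousWithinAt) hDc.le
    fun x hx hx₀ => ⟨_, by rw [sub_eq_zero.1 hx₀, sub_self, zero_add]; exact sub_pos.2 hμ,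
      (hDderiv x (hsub (Ico_subset_Icc_self hx))).hasDerivWithinAt⟩
  exact (hnonneg d (right_mem_Icc.2 hcd.le)).not_gt hDd

theorem angular_connector_eigenvalue_unique_general
    (a E lam lam' : ℝ)
    (Θ Θ' : ℝ → ℝ)
    (hode : ∀ θ ∈ Set.Ioo (0 : ℝ) π, HasDerivAt Θ
      (-2*a*Real.cos θ*Real.cos (Θ θ)
        + 2*(a*E*Real.sin θ - (1/2)/Real.sin θ)*Real.sin (Θ θ) + 2*lam) θ)
    (hode' : ∀ θ ∈ Set.Ioo (0 : ℝ) π, HasDerivAt Θ'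
      (-2*a*Real.cos θ*Real.cos (Θ' θ)
        + 2*(a*E*Real.sin θ - (1/2)/Real.sin θ)*Real.sin (Θ' θ) + 2*lam') θ)
    (hleft : Tendsto (fun θ : ℝ => Θ θ / θ) (nhdsWithin 0 (Set.Ioi 0)) (nhds (lam - a)))
    (hleft' : Tendsto (fun θ : ℝ => Θ' θ / θ) (nhdsWithin 0 (Set.Ioi 0)) (nhds (lam' - a)))
    (hright : Tendsto (fun θ : ℝ => (Θ θ + π) / (θ - π))
      (nhdsWithin π (Set.Iio π)) (nhds (lam - a)))
    (hright' : Tendsto (fun θ : ℝ => (Θ' θ + π) / (θ - π))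
      (nhdsWithin π (Set.Iio π)) (nhds (lam' - a))) :
    lam' = lam := by
  let F : ℝ → ℝ → ℝ := fun θ y =>
    -2*a*Real.cos θ*Real.cos y + 2*(a*E*Real.sin θ - (1/2)/Real.sin θ)*Real.sin y
  refine le_antisymm (not_lt.1 fun h => ?_) (not_lt.1 fun h => ?_)
  · exact false_of_comparison_of_slopes_lt F (by linarith) (by linarith)
      hode hode' hleft hleft' hright hright'
  · exact false_of_comparison_of_slopes_lt F (by linarith) (by linarith)
      hode' hode hleft' hleft hright' hright

/-- Uniqueness of the angular connector eigenvalue (κ = 1/2, m = 1): if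
`Θ, Θ' : (0,π) → (-π,0)` are `C¹` solutions of
`dΘ/dθ = -2a cosθ cosΘ + 2(aE sinθ - (1/2)/sinθ) sinΘ + 2λ` (resp. with `λ'`),
both with boundary behavior `Θ(0⁺) = 0`, `Θ(π⁻) = -π` and one-sided slope `λ - a`
(resp. `λ' - a`) at both endpoints, then `λ' = λ`. -/
theorem angular_connector_eigenvalue_unique
    (a E lam lam' : ℝ) (ha : a ∈ Set.Ioo (0 : ℝ) (1/2)) (hE : E ∈ Set.Icc (0 : ℝ) 1)
    (Θ Θ' : ℝ → ℝ)
    (hrange : ∀ θ ∈ Set.Ioo (0 : ℝ) π, Θ θ ∈ Set.Ioo (-π) 0)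
    (hrange' : ∀ θ ∈ Set.Ioo (0 : ℝ) π, Θ' θ ∈ Set.Ioo (-π) 0)
    (hode : ∀ θ ∈ Set.Ioo (0 : ℝ) π, HasDerivAt Θ
      (-2*a*Real.cos θ*Real.cos (Θ θ)
        + 2*(a*E*Real.sin θ - (1/2)/Real.sin θ)*Real.sin (Θ θ) + 2*lam) θ)
    (hode' : ∀ θ ∈ Set.Ioo (0 : ℝ) π, HasDerivAt Θ'
      (-2*a*Real.cos θ*Real.cos (Θ' θ)
        + 2*(a*E*Real.sin θ - (1/2)/Real.sin θ)*Real.sin (Θ' θ) + 2*lam') θ)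
    (hleft : Tendsto (fun θ : ℝ => Θ θ / θ) (nhdsWithin 0 (Set.Ioi 0)) (nhds (lam - a)))
    (hleft' : Tendsto (fun θ : ℝ => Θ' θ / θ) (nhdsWithin 0 (Set.Ioi 0)) (nhds (lam' - a)))
    (hright : Tendsto (fun θ : ℝ => (Θ θ + π) / (θ - π))
      (nhdsWithin π (Set.Iio π)) (nhds (lam - a)))
    (hright' : Tendsto (fun θ : ℝ => (Θ' θ + π) / (θ - π))
      (nhdsWithin π (Set.Iio π)) (nhds (lam' - a))) :
    lam' = lam :=
  angular_connector_eigenvalue_unique_general a E lam lam' Θ Θ' hode hode' hleft hleft' hright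
    hright'
end

section
/- Decay of the radial amplitude: Suppose Ω : ℝ → ℝ is continuous with lim_{r→+∞} Ω(r) = -arccos(E) and lim_{r→-∞} Ω(r) = -π + arccos(E) for some E ∈ [0,1), and R : ℝ → (0,∞) solves d(ln R)/dr = (r/√(r²+a²))·sin Ω(r) - (λ/√(r²+a²))·cos Ω(r) with a > 0, λ ∈ ℝ. Then for every ε ∈ (0, √(1-E²)) there exist C > 0 such that R(r) ≤ C·e^{-(√(1-E²) - ε)|r|} for all r; in particular R ∈ L^p(ℝ) for every p ≥ 1. -/
/-! The right-hand side of the equation for `log R` tends to `-√(1 - E²)` at `+∞` and to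
`√(1 - E²)` at `-∞`. Hence for `b < √(1 - E²)` the continuous function `log R r + b |r|` is
eventually nonincreasing at `+∞` and eventually nondecreasing at `-∞`, so it is bounded above.
Exponentiating gives the decay of `R`, and `R ^ p = exp (p log R)` is then dominated by a multiple
of the integrable function `exp (-p b |r|)`. -/

open Real Filter MeasureTheory

open Set Topology

theorem Continuous.bddAbove_range_of_eventually_le_cocompact {X α : Type*} [TopologicalSpace X]
    [LinearOrder α] [TopologicalSpace α] [ClosedIciTopology α]
    {g : X → α} (hg : Continuous g) {C : α} (h : ∀ᶠ x in cocompact X, g x ≤ C) :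
    BddAbove (range g) := by
  obtain ⟨K, hK, hKC⟩ := mem_cocompact.1 h
  have : Nonempty α := ⟨C⟩
  obtain ⟨C', hC'⟩ := hK.bddAbove_image hg.continuousOn
  refine ⟨max C C', ?_⟩
  rintro _ ⟨x, rfl⟩
  by_cases hx : x ∈ K
  · exact le_max_of_le_right (hC' (mem_image_of_mem g hx))
  · exact le_max_of_le_left (hKC hx)

section

variable {f f' : ℝ → ℝ} {b : ℝ}

theorem exists_eventually_le_sub_mul_atTop (hf : ∀ x, HasDerivAt f (f' x) x)
    (h : ∀ᶠ x in atTop, f' x ≤ -b) : ∃ C, ∀ᶠ x in atTop, f x ≤ C - b * x := by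
  obtain ⟨N, hN⟩ := eventually_atTop.1 h
  have hF : ∀ x, HasDerivAt (fun x => f x + b * x) (f' x + b) x := fun x =>
    (hf x).add (by simpa using (hasDerivAt_id x).const_mul b)
  have hanti : AntitoneOn (fun x => f x + b * x) (Ici N) := by
    refine antitoneOn_of_deriv_nonpos (convex_Ici N)
      (fun x _ => (hF x).continuousAt.continuousWithinAt)
      (fun x _ => (hF x).differentiableAt.differentiableWithinAt) fun x hx => ?_
    rw [interior_Ici] at hx
    rw [(hF x).deriv]
    linarith [hN x hx.le]
  refine ⟨f N + b * N, eventually_atTop.2 ⟨N, fun x hx => ?_⟩⟩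
  linarith [hanti self_mem_Ici hx hx]

theorem exists_eventually_le_add_mul_atBot (hf : ∀ x, HasDerivAt f (f' x) x)
    (h : ∀ᶠ x in atBot, b ≤ f' x) : ∃ C, ∀ᶠ x in atBot, f x ≤ C + b * x := by
  have hneg : ∀ x, HasDerivAt (fun x => f (-x)) (-f' (-x)) x := fun x => by
    simpa [Function.comp_def] using (hf (-x)).comp x (hasDerivAt_neg x)
  obtain ⟨C, hC⟩ := exists_eventually_le_sub_mul_atTop hneg
    ((tendsto_neg_atTop_atBot.eventually h).mono fun x hx => neg_le_neg hx)
  refine ⟨C, (tendsto_neg_atBot_atTop.eventually hC).mono fun x hx => ?_⟩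
  simpa using hx

theorem exists_le_sub_mul_abs_of_hasDerivAt (hf : ∀ x, HasDerivAt f (f' x) x)
    (htop : ∀ᶠ x in atTop, f' x ≤ -b) (hbot : ∀ᶠ x in atBot, b ≤ f' x) :
    ∃ C, ∀ x, f x ≤ C - b * |x| := by
  obtain ⟨C₁, hC₁⟩ := exists_eventually_le_sub_mul_atTop hf htop
  obtain ⟨C₂, hC₂⟩ := exists_eventually_le_add_mul_atBot hf hbot
  have hcont : Continuous fun x => f x + b * |x| :=
    (continuous_iff_continuousAt.2 fun x => (hf x).continuousAt).add (by fun_prop)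
  have hcocompact : ∀ᶠ x in cocompact ℝ, f x + b * |x| ≤ max C₁ C₂ := by
    rw [cocompact_eq_atBot_atTop, eventually_sup]
    constructor
    · filter_upwards [hC₂, eventually_le_atBot 0] with x hx hx0
      rw [abs_of_nonpos hx0]
      linarith [le_max_right C₁ C₂]
    · filter_upwards [hC₁, eventually_ge_atTop 0] with x hx hx0
      rw [abs_of_nonneg hx0]
      linarith [le_max_left C₁ C₂]
  obtain ⟨C, hC⟩ := hcont.bddAbove_range_of_eventually_le_cocompact hcocompact
  exact ⟨C, fun x => by linarith [hC (mem_range_self x)]⟩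

end

theorem tendsto_div_sqrt_sq_add_atTop (c : ℝ) :
    Tendsto (fun x : ℝ => x / √(x ^ 2 + c)) atTop (𝓝 1) := by
  have hlim : Tendsto (fun x : ℝ => (√(1 + c / x ^ 2))⁻¹) atTop (𝓝 1) := by
    have : Tendsto (fun x : ℝ => c / x ^ 2) atTop (𝓝 0) :=
      tendsto_const_nhds.div_atTop (tendsto_pow_atTop two_ne_zero)
    simpa using ((continuous_sqrt.tendsto _).comp (this.const_add 1)).inv₀ (by simp)
  refine hlim.congr' ((eventually_gt_atTop 0).mono fun x hx => ?_)
  dsimp only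
  rw [show x ^ 2 + c = x ^ 2 * (1 + c / x ^ 2) by field_simp, sqrt_mul (sq_nonneg x),
    sqrt_sq hx.le]
  field_simp

theorem tendsto_div_sqrt_sq_add_atBot (c : ℝ) :
    Tendsto (fun x : ℝ => x / √(x ^ 2 + c)) atBot (𝓝 (-1)) := by
  simpa [neg_div] using ((tendsto_div_sqrt_sq_add_atTop c).comp tendsto_neg_atBot_atTop).neg

theorem tendsto_sqrt_sq_add_atTop (c : ℝ) : Tendsto (fun x : ℝ => √(x ^ 2 + c)) atTop atTop :=
  tendsto_sqrt_atTop.comp (tendsto_atTop_add_const_right _ c (tendsto_pow_atTop two_ne_zero))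

theorem tendsto_sqrt_sq_add_atBot (c : ℝ) : Tendsto (fun x : ℝ => √(x ^ 2 + c)) atBot atTop := by
  simpa [Function.comp_def] using (tendsto_sqrt_sq_add_atTop c).comp tendsto_neg_atBot_atTop

theorem integrable_exp_neg_mul_abs {d : ℝ} (hd : 0 < d) :
    Integrable fun x : ℝ => exp (-d * |x|) := by
  refine (continuous_exp.comp (by fun_prop)).locallyIntegrable
    |>.integrable_of_isBigO_atTop_of_norm_isNegInvariant
      (Eventually.of_forall fun x => by simp) (Asymptotics.isBigO_refl _ _) ?_
  exact ⟨Ioi 0, Ioi_mem_atTop 0, (exp_neg_integrableOn_Ioi 0 hd).congr_fun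
    (fun x hx => by simp [abs_of_pos (mem_Ioi.1 hx)]) measurableSet_Ioi⟩

theorem integrable_exp_of_le_sub_mul_abs {g : ℝ → ℝ} {C d : ℝ} (hg : Continuous g) (hd : 0 < d)
    (h : ∀ x, g x ≤ C - d * |x|) : Integrable fun x => exp (g x) := by
  refine ((integrable_exp_neg_mul_abs hd).const_mul (exp C)).mono'
    (continuous_exp.comp hg).aestronglyMeasurable (Eventually.of_forall fun x => ?_)
  rw [norm_of_nonneg (exp_pos _).le, ← exp_add]
  exact exp_le_exp.2 (by linarith [h x])

theorem radial_amplitude_decay_general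
    (a lam E : ℝ) (hE : E ∈ Set.Ico (0 : ℝ) 1)
    (Ω : ℝ → ℝ)
    (hΩtop : Tendsto Ω atTop (nhds (-Real.arccos E)))
    (hΩbot : Tendsto Ω atBot (nhds (-π + Real.arccos E)))
    (R : ℝ → ℝ) (hRpos : ∀ r : ℝ, 0 < R r)
    (hode : ∀ r : ℝ, HasDerivAt (fun r' : ℝ => Real.log (R r'))
      ((r / Real.sqrt (r ^ 2 + a ^ 2)) * Real.sin (Ω r)
        - (lam / Real.sqrt (r ^ 2 + a ^ 2)) * Real.cos (Ω r)) r) :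
    (∀ ε ∈ Set.Ioo (0 : ℝ) (Real.sqrt (1 - E ^ 2)), ∃ C : ℝ, 0 < C ∧
      ∀ r : ℝ, R r ≤ C * Real.exp (-(Real.sqrt (1 - E ^ 2) - ε) * |r|))
    ∧ (∀ p : ℝ, 1 ≤ p → Integrable (fun r : ℝ => R r ^ p)) := by
  set s := √(1 - E ^ 2)
  have hs : 0 < s := sqrt_pos.2 (by nlinarith [hE.1, hE.2])
  have hsin_top : Tendsto (fun r => sin (Ω r)) atTop (𝓝 (-s)) := by
    simpa [Function.comp_def, sin_arccos] using (continuous_sin.tendsto _).comp hΩtop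
  have hsin_bot : Tendsto (fun r => sin (Ω r)) atBot (𝓝 (-s)) := by
    simpa [Function.comp_def, neg_add_eq_sub, sin_sub_pi, sin_arccos]
      using (continuous_sin.tendsto _).comp hΩbot
  have hrhs_top := ((tendsto_div_sqrt_sq_add_atTop (a ^ 2)).mul hsin_top).sub
    (((tendsto_const_nhds (x := lam)).div_atTop (tendsto_sqrt_sq_add_atTop (a ^ 2))).mul
      ((continuous_cos.tendsto _).comp hΩtop))
  have hrhs_bot := ((tendsto_div_sqrt_sq_add_atBot (a ^ 2)).mul hsin_bot).sub
    (((tendsto_const_nhds (x := lam)).div_atTop (tendsto_sqrt_sq_add_atBot (a ^ 2))).mul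
      ((continuous_cos.tendsto _).comp hΩbot))
  simp only [one_mul, neg_one_mul, neg_neg, zero_mul, sub_zero] at hrhs_top hrhs_bot
  have hlog : ∀ ε ∈ Set.Ioo 0 s, ∃ K, ∀ r, log (R r) ≤ K - (s - ε) * |r| := fun ε hε =>
    exists_le_sub_mul_abs_of_hasDerivAt hode
      (hrhs_top.eventually (ge_mem_nhds (by linarith [hε.1])))
      (hrhs_bot.eventually (le_mem_nhds (by linarith [hε.1])))
  refine ⟨fun ε hε => ?_, fun p hp => ?_⟩
  · obtain ⟨K, hK⟩ := hlog ε hε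
    refine ⟨exp K, exp_pos K, fun r => ?_⟩
    rw [← exp_log (hRpos r), ← exp_add]
    exact exp_le_exp.2 (by linarith [hK r])
  · obtain ⟨K, hK⟩ := hlog (s / 2) ⟨half_pos hs, half_lt_self hs⟩
    have hcont : Continuous fun r => log (R r) :=
      continuous_iff_continuousAt.2 fun r => (hode r).continuousAt
    simp_rw [rpow_def_of_pos (hRpos _)]
    refine integrable_exp_of_le_sub_mul_abs (C := K * p) (hcont.mul continuous_const)
      (mul_pos (half_pos hs) (by linarith)) fun r => ?_
    linarith [mul_le_mul_of_nonneg_right (hK r) (by linarith : 0 ≤ p)]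

/-- Decay of the radial amplitude: if `Ω` is continuous with
`Ω(r) → -arccos E` as `r → +∞` and `Ω(r) → -π + arccos E` as `r → -∞` for some
`E ∈ [0,1)`, and `R > 0` solves
`d(ln R)/dr = (r/√(r²+a²))·sin Ω(r) - (λ/√(r²+a²))·cos Ω(r)` with `a > 0`,
then for every `ε ∈ (0, √(1-E²))` there is `C > 0` with
`R(r) ≤ C·e^{-(√(1-E²)-ε)|r|}` for all `r`; in particular `R ∈ Lᵖ(ℝ)` for all `p ≥ 1`. -/
theorem radial_amplitude_decay
    (a lam E : ℝ) (ha : 0 < a) (hE : E ∈ Set.Ico (0 : ℝ) 1)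
    (Ω : ℝ → ℝ) (hΩcont : Continuous Ω)
    (hΩtop : Tendsto Ω atTop (nhds (-Real.arccos E)))
    (hΩbot : Tendsto Ω atBot (nhds (-π + Real.arccos E)))
    (R : ℝ → ℝ) (hRpos : ∀ r : ℝ, 0 < R r) (hRcont : Continuous R)
    (hode : ∀ r : ℝ, HasDerivAt (fun r' : ℝ => Real.log (R r'))
      ((r / Real.sqrt (r ^ 2 + a ^ 2)) * Real.sin (Ω r)
        - (lam / Real.sqrt (r ^ 2 + a ^ 2)) * Real.cos (Ω r)) r) :
    (∀ ε ∈ Set.Ioo (0 : ℝ) (Real.sqrt (1 - E ^ 2)), ∃ C : ℝ, 0 < C ∧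
      ∀ r : ℝ, R r ≤ C * Real.exp (-(Real.sqrt (1 - E ^ 2) - ε) * |r|))
    ∧ (∀ p : ℝ, 1 ≤ p → Integrable (fun r : ℝ => R r ^ p)) :=
  radial_amplitude_decay_general a lam E hE Ω hΩtop hΩbot R hRpos hode
end
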